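/- Let q = p^e be a prime power with q ≡ 1 (mod 2), T a generator of the character group of F_q^×, and l an integer. Then G_{-2l} = G_{-l} · G_{-l-(q-1)/2} / (G_{(q-1)/2} · T^l(4)), provided the quantities are defined (Davenport–Hasse relation for m = 2 applied to ψ = T^{-l}). -/

import Mathlib

open Finset Complex

/-- The root of unity `e^{2πi/p}`. -/
noncomputable def zetaP (p : ℕ) : ℂ := Complex.exp (2 * Real.pi * Complex.I / p)

lemma zetaP_pow (p : ℕ) (hp : p ≠ 0) : zetaP p ^ p = 1 := by
  rw [zetaP, ← Complex.exp_nat_mul]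
  have : (p : ℂ) * (2 * Real.pi * Complex.I / p) = 2 * Real.pi * Complex.I := by
    rw [mul_div_assoc']
    exact mul_div_cancel_left₀ _ (by exact_mod_cast hp)
  rw [this, Complex.exp_two_pi_mul_I]

/-- The canonical additive character `θ(α) = ζ_p^{tr α}` of a finite field of
characteristic `p`. -/
noncomputable def theta (p : ℕ) [hp : Fact p.Prime] (F : Type*) [Field F] [Fintype F]
    [Algebra (ZMod p) F] : AddChar F ℂ :=
  (AddChar.zmodChar p (zetaP_pow p hp.out.ne_zero)).compAddMonoidHom
    (Algebra.trace (ZMod p) F).toAddMonoidHom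

/-- Gauss sum `G_m = G(T^m)` with respect to the canonical additive character. -/
noncomputable def GG (p : ℕ) [Fact p.Prime] {F : Type*} [Field F] [Fintype F]
    [Algebra (ZMod p) F] (T : MulChar F ℂ) (m : ℤ) : ℂ :=
  gaussSum (T ^ m) (theta p F)

/-- Greene's binomial coefficient `binom(A,B) = (B(-1)/q) J(A, B⁻¹)`. -/
noncomputable def greeneBinom (F : Type*) [Field F] [Fintype F] (A B : MulChar F ℂ) : ℂ :=
  B (-1) / (Fintype.card F : ℂ) * ∑ x : F, A x * B⁻¹ (1 - x)

/-- Greene's hypergeometric series `₂F₁(A,B;C|x)`, with the sum over all characters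
written as a sum over the powers of a generator `T` of the character group. -/
noncomputable def hyp2F1 {F : Type*} [Field F] [Fintype F] (T A B C : MulChar F ℂ) (x : F) : ℂ :=
  (Fintype.card F : ℂ) / ((Fintype.card F : ℂ) - 1) *
    ∑ n ∈ Finset.range (Fintype.card F - 1),
      greeneBinom F (A * T ^ n) (T ^ n) * greeneBinom F (B * T ^ n) (C * T ^ n) * (T ^ n) x

lemma theta_primitive (p : ℕ) [hp : Fact p.Prime] (F : Type*) [Field F] [Fintype F]
    [Algebra (ZMod p) F] : (theta p F).IsPrimitive := by
  apply AddChar.IsPrimitive.of_ne_one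
  intro h
  haveI : FiniteDimensional (ZMod p) F := Module.Finite.of_finite
  have hb : ∃ b : F, Algebra.trace (ZMod p) F b ≠ 0 := by
    have htr := (traceForm_nondegenerate (ZMod p) F).1 1
    simp_rw [Algebra.traceForm_apply, one_mul] at htr
    by_contra! hf
    exact one_ne_zero (htr hf)
  obtain ⟨b, hb⟩ := hb
  have hζ : IsPrimitiveRoot (zetaP p) p := Complex.isPrimitiveRoot_exp p hp.out.ne_zero
  have hθb : theta p F b = 1 := by rw [h, AddChar.one_apply]
  rw [theta, AddChar.compAddMonoidHom_apply, AddChar.zmodChar_apply] at hθb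
  have hdvd : p ∣ (Algebra.trace (ZMod p) F b).val := hζ.dvd_of_pow_eq_one _ hθb
  have hlt : (Algebra.trace (ZMod p) F b).val < p := ZMod.val_lt _
  have hne : (Algebra.trace (ZMod p) F b).val ≠ 0 := by
    simpa [ZMod.val_eq_zero] using hb
  exact absurd (Nat.le_of_dvd (Nat.pos_of_ne_zero hne) hdvd) (not_le.mpr hlt)

theorem stmt4 {p : ℕ} [hp : Fact p.Prime] (hp2 : p ≠ 2) {F : Type*} [Field F] [Fintype F]
    [Algebra (ZMod p) F] (T : MulChar F ℂ) (hT : ∀ χ : MulChar F ℂ, ∃ n : ℕ, χ = T ^ n) (l : ℤ) :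
    GG p T (-2 * l) =
      GG p T (-l) * GG p T (-l - (((Fintype.card F - 1) / 2 : ℕ) : ℤ)) /
        (GG p T (((Fintype.card F - 1) / 2 : ℕ) : ℤ) * (T ^ l) 4) := by
  classical
  set q := Fintype.card F with hqdef
  set s : ℕ := (q - 1) / 2 with hsdef
  -- characteristic facts
  have hch : CharP F p := charP_of_injective_algebraMap (algebraMap (ZMod p) F).injective p
  have hring : ringChar F = p := by
    have := ringChar.eq F p
    omega
  have hF2 : ringChar F ≠ 2 := by rw [hring]; exact hp2
  have hp3 : 3 ≤ p := by
    have := hp.out.two_le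
    omega
  -- q = p ^ n odd, q ≥ 3
  obtain ⟨n, -, hcard⟩ := FiniteField.card F p
  have hqn : q = p ^ (n : ℕ) := hcard
  have hq3 : 3 ≤ q := by
    have h1 : p ≤ p ^ (n : ℕ) := Nat.le_self_pow n.pos.ne' p
    omega
  have hqodd : q % 2 = 1 := by
    have : Odd q := by
      rw [hqn]
      exact (hp.out.odd_of_ne_two hp2).pow
    exact Nat.odd_iff.mp this
  have hs2 : q - 1 = 2 * s := by omega
  have hs1 : 1 ≤ s := by omega
  -- (2 : F) ≠ 0, (4 : F) ≠ 0
  have h2F : (2 : F) ≠ 0 := by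
    intro h
    have : (((2:ℕ)) : F) = 0 := by exact_mod_cast h
    have := (CharP.cast_eq_zero_iff F p 2).mp this
    have := (Nat.prime_dvd_prime_iff_eq hp.out Nat.prime_two).mp this
    exact hp2 this
  have h4F : (4 : F) ≠ 0 := by
    have : (4 : F) = 2 * 2 := by norm_num
    rw [this]
    exact mul_ne_zero h2F h2F
  have h4u : IsUnit (4 : F) := isUnit_iff_ne_zero.mpr h4F
  -- order of T
  haveI : Fintype (MulChar F ℂ) := Fintype.ofFinite _
  haveI : NeZero ((Monoid.exponent Fˣ : ℂ)) :=
    ⟨Nat.cast_ne_zero.mpr Monoid.exponent_ne_zero_of_finite⟩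
  have horder : orderOf T = q - 1 := by
    have hmem : ∀ χ : MulChar F ℂ, χ ∈ Subgroup.zpowers T := by
      intro χ
      obtain ⟨m, rfl⟩ := hT χ
      exact ⟨(m : ℤ), by simp [zpow_natCast]⟩
    rw [orderOf_eq_card_of_forall_mem_zpowers hmem,
      MulChar.card_eq_card_units_of_hasEnoughRootsOfUnity, Nat.card_eq_fintype_card,
      Fintype.card_units]
  -- the characters
  set θ := theta p F with hθdef
  have hψ : θ.IsPrimitive := theta_primitive p F
  have hq0 : ((q : ℂ)) ≠ 0 := Nat.cast_ne_zero.mpr (by omega)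
  set χ := T ^ (-l) with hχdef
  set η := T ^ (s : ℤ) with hηdef
  have hη2 : η * η = 1 := by
    rw [hηdef, ← zpow_add, ← Int.natCast_add, zpow_natCast,
      show s + s = q - 1 from by omega, ← horder, pow_orderOf_eq_one]
  have hηinv : η⁻¹ = η := inv_eq_of_mul_eq_one_right hη2
  have hη1 : η ≠ 1 := by
    intro h
    rw [hηdef, zpow_natCast] at h
    have := orderOf_dvd_of_pow_eq_one h
    rw [horder] at this
    have := Nat.le_of_dvd (by omega) this
    omega
  -- rewrite the goal
  have hTl : T ^ l = χ⁻¹ := by rw [hχdef, zpow_neg, inv_inv]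
  have e1 : T ^ (-2 * l) = χ * χ := by
    rw [hχdef, ← zpow_add]
    ring_nf
  have e2 : T ^ (-l - (s : ℤ)) = χ * η := by
    rw [sub_eq_add_neg, zpow_add, ← hχdef, zpow_neg, ← hηdef, hηinv]
  rw [GG, GG, GG, GG, e1, e2, ← hηdef, ← hχdef, ← hθdef, hTl]
  -- gauss sums nonzero
  have hgη : gaussSum η θ ≠ 0 := gaussSum_ne_zero_of_nontrivial hq0 hη1 hψ
  -- value χ⁻¹ 4
  have hc1 : χ⁻¹ 4 * χ 4 = 1 := by
    rw [← MulChar.mul_apply, inv_mul_cancel, MulChar.one_apply h4u]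
  have hc0 : χ⁻¹ 4 ≠ 0 := left_ne_zero_of_mul_eq_one hc1
  have hχ40 : χ 4 ≠ 0 := right_ne_zero_of_mul_eq_one hc1
  by_cases hχ1 : χ = 1
  · -- χ trivial
    rw [hχ1]
    simp only [one_mul, inv_one]
    rw [MulChar.one_apply h4u, mul_one, mul_div_assoc, div_self hgη, mul_one]
  by_cases hχη : χ = η
  · -- χ = quadratic character
    have hη4 : η (4 : F) = 1 := by
      have : (4 : F) = 2 * 2 := by norm_num
      rw [this, map_mul, ← MulChar.mul_apply, hη2,
        MulChar.one_apply (isUnit_iff_ne_zero.mpr h2F)]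
    rw [hχη, hη2, hηinv, hη4, mul_one, mul_comm (gaussSum η θ), mul_div_assoc,
      div_self hgη, mul_one]
  · -- main case
    have hχχ : χ * χ ≠ 1 := by
      intro h
      rw [hχdef, ← zpow_add] at h
      have hdvd : ((q - 1 : ℕ) : ℤ) ∣ (-l + -l) := by
        rw [← horder]; exact orderOf_dvd_iff_zpow_eq_one.mpr h
      obtain ⟨k, hk⟩ := hdvd
      have hlk : -l = (s : ℤ) * k := by
        rw [hs2] at hk
        push_cast at hk
        linarith
      have hχk : χ = η ^ k := by
        rw [hχdef, hlk, hηdef, ← zpow_mul]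
      rcases Int.even_or_odd k with ⟨m, hm⟩ | ⟨m, hm⟩
      · apply hχ1
        rw [hχk, hm, zpow_add, ← mul_zpow, hη2, one_zpow]
      · apply hχη
        rw [hχk, show k = m + m + 1 from by omega, zpow_add, zpow_add, ← mul_zpow, hη2,
          one_zpow, zpow_one, one_mul]
    have hηχ : η * χ ≠ 1 := by
      intro h
      exact hχη (by rw [← hηinv]; exact (eq_inv_of_mul_eq_one_right h).symm ▸ rfl)
    have hgχ : gaussSum χ θ ≠ 0 := gaussSum_ne_zero_of_nontrivial hq0 hχ1 hψ
    have hgχη : gaussSum (χ * η) θ ≠ 0 := by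
      rw [mul_comm]
      exact gaussSum_ne_zero_of_nontrivial hq0 hηχ hψ
    -- η agrees with the quadratic character
    have heq : ∀ u : F, η u = ((quadraticChar F u : ℤ) : ℂ) := by
      intro u
      by_cases hu : u = 0
      · rw [hu, MulChar.map_zero, MulChar.map_zero]; norm_num
      have hu2 : (η u) * (η u) = 1 := by
        rw [← MulChar.mul_apply, hη2, MulChar.one_apply (isUnit_iff_ne_zero.mpr hu)]
      have hsqeta : ∀ v : F, v ≠ 0 → IsSquare v → η v = 1 := by
        intro v hv ⟨r, hr⟩
        have hr0 : r ≠ 0 := by rintro rfl; simp at hr; exact hv hr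
        rw [hr, map_mul, ← MulChar.mul_apply, hη2,
          MulChar.one_apply (isUnit_iff_ne_zero.mpr hr0)]
      by_cases hsq : IsSquare u
      · rw [hsqeta u hu hsq, (quadraticChar_one_iff_isSquare hu).mpr hsq]
        norm_num
      · rw [quadraticChar_neg_one_iff_not_isSquare.mpr hsq]
        -- find a with η a = -1
        obtain ⟨a, ha⟩ : ∃ a : F, η a ≠ (1 : MulChar F ℂ) a := by
          by_contra! hcon
          exact hη1 (MulChar.ext fun a => hcon a)
        have ha0 : a ≠ 0 := by
          intro h
          rw [h, MulChar.map_zero, MulChar.map_zero] at ha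
          exact ha rfl
        have hau : IsUnit a := isUnit_iff_ne_zero.mpr ha0
        rw [MulChar.one_apply hau] at ha
        have ha2 : (η a) * (η a) = 1 := by
          rw [← MulChar.mul_apply, hη2, MulChar.one_apply hau]
        have haneg : η a = -1 := by
          rcases mul_self_eq_one_iff.mp ha2 with h | h
          · exact absurd h ha
          · exact h
        have hans : ¬ IsSquare a := by
          intro h
          rw [hsqeta a ha0 h] at haneg
          norm_num at haneg
        -- u * a is a square
        have hum : IsSquare (u * a) := by
          have h1 : quadraticChar F (u * a) = 1 := by
            rw [map_mul, quadraticChar_neg_one_iff_not_isSquare.mpr hsq,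
              quadraticChar_neg_one_iff_not_isSquare.mpr hans]
            norm_num
          exact (quadraticChar_one_iff_isSquare (mul_ne_zero hu ha0)).mp h1
        have : η u * η a = 1 := by
          rw [← map_mul]
          exact hsqeta _ (mul_ne_zero hu ha0) hum
        rw [haneg] at this
        push_cast
        linear_combination -this
    -- counting square roots
    have hcount : ∀ u : F, ((Finset.univ.filter (fun t : F => t ^ 2 = u)).card : ℂ)
        = 1 + η u := by
      intro u
      have h1 : (({x : F | x ^ 2 = u}.toFinset.card : ℤ)) = quadraticChar F u + 1 :=
        quadraticChar_card_sqrts hF2 u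
      have h2 : {x : F | x ^ 2 = u}.toFinset = Finset.univ.filter (fun t : F => t ^ 2 = u) := by
        ext x; simp
      rw [h2] at h1
      have h3 := congrArg (fun z : ℤ => (z : ℂ)) h1
      push_cast at h3
      rw [h3, heq u]
      ring
    -- the sum S
    have hS : ∑ t : F, χ (1 - t ^ 2) = jacobiSum η χ := by
      have step1 : ∑ t : F, χ (1 - t ^ 2)
          = ∑ u : F, ∑ t ∈ Finset.univ.filter (fun t : F => t ^ 2 = u), χ (1 - t ^ 2) := by
        exact (Finset.sum_fiberwise_of_maps_to (fun t _ => Finset.mem_univ _)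
          (fun t => χ (1 - t ^ 2))).symm
      rw [step1]
      have step2 : ∀ u : F, ∑ t ∈ Finset.univ.filter (fun t : F => t ^ 2 = u), χ (1 - t ^ 2)
          = (1 + η u) * χ (1 - u) := by
        intro u
        rw [Finset.sum_congr rfl (fun t ht => by
          rw [(Finset.mem_filter.mp ht).2]), Finset.sum_const, nsmul_eq_mul, hcount]
      rw [Finset.sum_congr rfl (fun u _ => step2 u)]
      have step3 : ∑ u : F, (1 + η u) * χ (1 - u)
          = (∑ u : F, χ (1 - u)) + ∑ u : F, η u * χ (1 - u) := by
        rw [← Finset.sum_add_distrib]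
        apply Finset.sum_congr rfl
        intro u _
        ring
      rw [step3]
      have step4 : ∑ u : F, χ (1 - u) = 0 := by
        have := Equiv.sum_comp (Equiv.subLeft (1 : F)) (fun v => χ v)
        simp only [Equiv.subLeft_apply] at this
        rw [this]
        exact MulChar.sum_eq_zero_of_ne_one hχ1
      rw [step4, zero_add]
      rfl
    -- Jacobi sum identity
    have hJ : jacobiSum χ χ = χ 4⁻¹ * jacobiSum η χ := by
      have hstep : jacobiSum χ χ = ∑ x : F, χ (x * (1 - x)) := by
        rw [jacobiSum]
        exact Finset.sum_congr rfl (fun x _ => (map_mul χ x (1 - x)).symm)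
      rw [hstep]
      set e : F ≃ F := (Equiv.addLeft (1 : F)).trans (Equiv.mulLeft₀ (2 : F)⁻¹
        (inv_ne_zero h2F)) with hedef
      have hcomp := Equiv.sum_comp e (fun x => χ (x * (1 - x)))
      rw [← hcomp]
      have hpt : ∀ t : F, χ (e t * (1 - e t)) = χ 4⁻¹ * χ (1 - t ^ 2) := by
        intro t
        have het : e t = (2 : F)⁻¹ * (1 + t) := by
          simp [hedef, Equiv.mulLeft₀, add_comm]
        have harg : e t * (1 - e t) = (4 : F)⁻¹ * (1 - t ^ 2) := by
          rw [het]
          field_simp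
          ring
        rw [harg, map_mul]
      rw [Finset.sum_congr rfl (fun t _ => hpt t), ← Finset.mul_sum, hS]
    -- assemble
    have hA : gaussSum (χ * χ) θ * jacobiSum χ χ = gaussSum χ θ * gaussSum χ θ :=
      jacobiSum_mul_nontrivial hχχ θ
    have hB' : gaussSum (χ * η) θ * jacobiSum η χ = gaussSum η θ * gaussSum χ θ := by
      rw [mul_comm χ η]
      exact jacobiSum_mul_nontrivial hηχ θ
    have hJ0 : jacobiSum η χ ≠ 0 := by
      intro h0
      rw [h0, mul_zero] at hB'
      exact mul_ne_zero hgη hgχ hB'.symm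
    have hc4 : χ⁻¹ 4 = χ 4⁻¹ := by
      have h2 : χ 4⁻¹ * χ 4 = 1 := by
        rw [← map_mul, inv_mul_cancel₀ h4F, MulChar.map_one]
      exact mul_right_cancel₀ hχ40 (hc1.trans h2.symm)
    rw [hc4, eq_div_iff (mul_ne_zero hgη (hc4 ▸ hc0))]
    apply mul_right_cancel₀ hJ0
    linear_combination (gaussSum η θ) * hA - (gaussSum (χ * χ) θ * gaussSum η θ) * hJ
      - (gaussSum χ θ) * hB'
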